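/- arXiv:2407.05252 — 2 statements merged into one kernel-verified Lean document; each statement's English description precedes it below -/
import Mathlib

section
/- Write f₁(u) = B₁(u,y) + B̄₁(u) and f₂(u) = B₂(u,z) + B̄₂(u), and let G(t) be the solution of the initial value problem u' = (f₁(u), f₂(u)), u(0) = x, with values in [0,1]². If f₁(x) ≤ 0 and f₂(x) ≤ 0, then f₁(G(t)) ≤ 0 and f₂(G(t)) ≤ 0 for all t ≥ 0; consequently both components of G(t) are nonincreasing in t, and lim_{t→∞} G(t) = q(y,z), the unique root in [0,1]² of the system f₁ = f₂ = 0. -/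
open scoped BigOperators

noncomputable def genFun (b : ℕ × ℕ → ℝ) (x : ℝ × ℝ) : ℝ :=
  ∑' j : ℕ × ℕ, b j * x.1 ^ j.1 * x.2 ^ j.2

/-- The Jacobian matrix `(B_{ij}(x))` of the generating functions, with entries
`B_{ij}(x) = ∂B_i(x)/∂x_j` written out as termwise-differentiated series. -/
noncomputable def jacMat (b₁ b₂ : ℕ × ℕ → ℝ) (x : ℝ × ℝ) : Matrix (Fin 2) (Fin 2) ℝ :=
  !![∑' j : ℕ × ℕ, b₁ j * (j.1 : ℝ) * x.1 ^ (j.1 - 1) * x.2 ^ j.2,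
     ∑' j : ℕ × ℕ, b₁ j * (j.2 : ℝ) * x.1 ^ j.1 * x.2 ^ (j.2 - 1);
     ∑' j : ℕ × ℕ, b₂ j * (j.1 : ℝ) * x.1 ^ (j.1 - 1) * x.2 ^ j.2,
     ∑' j : ℕ × ℕ, b₂ j * (j.2 : ℝ) * x.1 ^ j.1 * x.2 ^ (j.2 - 1)]

/-- `B_k(x, y) = ∑_{j ∈ R} b_j x₁^{j₁} x₂^{j₂} y_j`. -/
noncomputable def Bpart (b : ℕ × ℕ → ℝ) (R : Finset (ℕ × ℕ)) (x : ℝ × ℝ)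
    (y : {j // j ∈ R} → ℝ) : ℝ :=
  ∑ j : {j // j ∈ R}, b j.1 * x.1 ^ (j.1).1 * x.2 ^ (j.1).2 * y j

/-- `B̄_k(x) = ∑_{j ∉ R} b_j x₁^{j₁} x₂^{j₂}`. -/
noncomputable def Bbar (b : ℕ × ℕ → ℝ) (R : Finset (ℕ × ℕ)) (x : ℝ × ℝ) : ℝ :=
  ∑' j : ℕ × ℕ, if j ∈ R then 0 else b j * x.1 ^ j.1 * x.2 ^ j.2

section Helpers
open Filter Set
open scoped Topology

lemma abs_tsum_le_tsum {ι : Type*} {f u : ι → ℝ} (hu : Summable u) (hb : ∀ j, |f j| ≤ u j) :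
    |∑' j, f j| ≤ ∑' j, u j := by
  have hfa : Summable fun j => |f j| := hu.of_nonneg_of_le (fun j => abs_nonneg _) hb
  have hfa' : Summable fun j => ‖f j‖ := by simpa only [Real.norm_eq_abs] using hfa
  have h0 := norm_tsum_le_tsum_norm hfa'
  simp only [Real.norm_eq_abs] at h0
  calc |∑' j, f j| ≤ ∑' j, |f j| := h0
    _ ≤ ∑' j, u j := Summable.tsum_le_tsum hb hfa hu

lemma term_abs_le (a : ℕ × ℕ → ℝ) {u : ℝ × ℝ}
    (hu : u ∈ Set.Icc ((0:ℝ), (0:ℝ)) (1, 1)) (j : ℕ × ℕ) :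
    |a j * u.1 ^ j.1 * u.2 ^ j.2| ≤ |a j| := by
  obtain ⟨⟨h1, h2⟩, ⟨h3, h4⟩⟩ := hu
  have p1 : |u.1 ^ j.1| ≤ 1 := by
    rw [abs_of_nonneg (pow_nonneg h1 _)]; exact pow_le_one₀ h1 h3
  have p2 : |u.2 ^ j.2| ≤ 1 := by
    rw [abs_of_nonneg (pow_nonneg h2 _)]; exact pow_le_one₀ h2 h4
  calc |a j * u.1 ^ j.1 * u.2 ^ j.2| = |a j| * |u.1 ^ j.1| * |u.2 ^ j.2| := by
        rw [abs_mul, abs_mul]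
    _ ≤ |a j| * 1 * 1 := by gcongr <;> simp
    _ = |a j| := by ring

lemma summable_term (a : ℕ × ℕ → ℝ) (habs : Summable fun j => |a j|) {u : ℝ × ℝ}
    (hu : u ∈ Set.Icc ((0:ℝ), (0:ℝ)) (1, 1)) :
    Summable fun j : ℕ × ℕ => a j * u.1 ^ j.1 * u.2 ^ j.2 := by
  apply Summable.of_abs
  exact habs.of_nonneg_of_le (fun j => abs_nonneg _) (term_abs_le a hu)

lemma continuousOn_genFun (a : ℕ × ℕ → ℝ) (habs : Summable fun j => |a j|) :
    ContinuousOn (genFun a) (Set.Icc ((0:ℝ), (0:ℝ)) (1, 1)) := by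
  have h := tendstoUniformlyOn_tsum (F := ℝ) habs
    (f := fun j (u : ℝ × ℝ) => a j * u.1 ^ j.1 * u.2 ^ j.2)
    (s := Set.Icc ((0:ℝ), (0:ℝ)) (1, 1)) (fun j u hu => term_abs_le a hu j)
  exact h.continuousOn (Filter.Frequently.of_forall fun T =>
    (continuous_finset_sum T fun j _ => by fun_prop).continuousOn)

lemma genFun_abs_le (a : ℕ × ℕ → ℝ) (habs : Summable fun j => |a j|) {u : ℝ × ℝ}
    (hu : u ∈ Set.Icc ((0:ℝ), (0:ℝ)) (1, 1)) :
    |genFun a u| ≤ ∑' j, |a j| :=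
  abs_tsum_le_tsum habs (term_abs_le a hu)

lemma summable_abs_of_modified (b : ℕ × ℕ → ℝ) (e : ℕ × ℕ) (hb : ∀ j, j ≠ e → 0 ≤ b j)
    (hs : Summable fun j => if j = e then 0 else b j) : Summable fun j => |b j| := by
  have : (fun j => |b j|) =
      fun j => (if j = e then 0 else b j) + (if j = e then |b e| else 0) := by
    funext j
    by_cases h : j = e
    · subst h; simp
    · simp [h, abs_of_nonneg (hb j h)]
  rw [this]
  exact hs.add (summable_of_ne_finset_zero (s := {e}) (by intro j hj; simp at hj; simp [hj]))

lemma summable_abs_mul_of_modified (b : ℕ × ℕ → ℝ) (e : ℕ × ℕ) (w : ℕ × ℕ → ℝ)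
    (hb : ∀ j, j ≠ e → 0 ≤ b j) (hw : ∀ j, 0 ≤ w j)
    (hs : Summable fun j => b j * w j) : Summable fun j => |b j| * w j := by
  have : (fun j => |b j| * w j) =
      fun j => b j * w j + (if j = e then (|b e| - b e) * w e else 0) := by
    funext j
    by_cases h : j = e
    · subst h; simp; ring
    · simp [h, abs_of_nonneg (hb j h)]
  rw [this]
  exact hs.add (summable_of_ne_finset_zero (s := {e}) (by intro j hj; simp at hj; simp [hj]))

lemma Bpart_add_Bbar_eq (b : ℕ × ℕ → ℝ) (R : Finset (ℕ × ℕ)) (y : {j // j ∈ R} → ℝ)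
    (hsum : Summable fun j => |b j|) {u : ℝ × ℝ}
    (hu : u ∈ Set.Icc ((0:ℝ), (0:ℝ)) (1, 1)) :
    Bpart b R u y + Bbar b R u =
      genFun (fun j => if h : j ∈ R then b j * y ⟨j, h⟩ else b j) u := by
  set a : ℕ × ℕ → ℝ := fun j => if h : j ∈ R then b j * y ⟨j, h⟩ else b j with ha
  have hsplit : ∀ j : ℕ × ℕ, a j * u.1 ^ j.1 * u.2 ^ j.2 =
      (if h : j ∈ R then b j * u.1 ^ j.1 * u.2 ^ j.2 * y ⟨j, h⟩ else 0) +
      (if j ∈ R then 0 else b j * u.1 ^ j.1 * u.2 ^ j.2) := by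
    intro j
    by_cases h : j ∈ R
    · simp only [ha, dif_pos h, if_pos h, add_zero]; ring
    · simp only [ha, dif_neg h, if_neg h, zero_add]
  have hsum1 : Summable fun j : ℕ × ℕ =>
      (if h : j ∈ R then b j * u.1 ^ j.1 * u.2 ^ j.2 * y ⟨j, h⟩ else 0) :=
    summable_of_ne_finset_zero (s := R) (fun j hj => dif_neg hj)
  have hsum2 : Summable fun j : ℕ × ℕ =>
      (if j ∈ R then (0:ℝ) else b j * u.1 ^ j.1 * u.2 ^ j.2) := by
    apply Summable.of_abs
    apply hsum.of_nonneg_of_le (fun j => abs_nonneg _)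
    intro j
    by_cases h : j ∈ R
    · simp [h]
    · simpa [h] using term_abs_le b hu j
  have h1 : genFun a u = (∑' j : ℕ × ℕ,
      (if h : j ∈ R then b j * u.1 ^ j.1 * u.2 ^ j.2 * y ⟨j, h⟩ else 0)) + Bbar b R u := by
    unfold genFun Bbar
    rw [← Summable.tsum_add hsum1 hsum2]
    exact tsum_congr hsplit
  have h2 : (∑' j : ℕ × ℕ,
      (if h : j ∈ R then b j * u.1 ^ j.1 * u.2 ^ j.2 * y ⟨j, h⟩ else 0)) = Bpart b R u y := by
    rw [tsum_eq_sum (s := R) (fun j hj => dif_neg hj)]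
    unfold Bpart
    rw [Finset.univ_eq_attach, ← Finset.sum_attach R
      (fun j => if h : j ∈ R then b j * u.1 ^ j.1 * u.2 ^ j.2 * y ⟨j, h⟩ else 0)]
    apply Finset.sum_congr rfl
    intro j _
    rw [dif_pos j.2]
  rw [h1, h2]

lemma hasDerivAt_genFun_comp (a : ℕ × ℕ → ℝ)
    (habs : Summable fun j : ℕ × ℕ => |a j|)
    (hw1 : Summable fun j : ℕ × ℕ => |a j| * j.1)
    (hw2 : Summable fun j : ℕ × ℕ => |a j| * j.2)
    (g₁ g₂ d₁ d₂ : ℝ → ℝ) {s : Set ℝ} (hs : IsOpen s) (M : ℝ)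
    (hg₁ : ∀ t ∈ s, HasDerivAt g₁ (d₁ t) t) (hg₂ : ∀ t ∈ s, HasDerivAt g₂ (d₂ t) t)
    (h01 : ∀ t ∈ s, 0 ≤ g₁ t ∧ g₁ t ≤ 1 ∧ 0 ≤ g₂ t ∧ g₂ t ≤ 1)
    (hM₁ : ∀ t ∈ s, |d₁ t| ≤ M) (hM₂ : ∀ t ∈ s, |d₂ t| ≤ M)
    {t : ℝ} (ht : t ∈ s) :
    HasDerivAt (fun τ => genFun a (g₁ τ, g₂ τ))
      ((∑' j : ℕ × ℕ, a j * j.1 * g₁ t ^ (j.1 - 1) * g₂ t ^ j.2) * d₁ t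
        + (∑' j : ℕ × ℕ, a j * j.2 * g₁ t ^ j.1 * g₂ t ^ (j.2 - 1)) * d₂ t) t := by
  have hM0 : 0 ≤ M := le_trans (abs_nonneg _) (hM₁ t ht)
  set F : ℕ × ℕ → ℝ → ℝ := fun j τ => a j * g₁ τ ^ j.1 * g₂ τ ^ j.2 with hF
  set F' : ℕ × ℕ → ℝ → ℝ := fun j τ =>
    a j * ((j.1 : ℝ) * g₁ τ ^ (j.1 - 1) * d₁ τ) * g₂ τ ^ j.2
      + a j * g₁ τ ^ j.1 * ((j.2 : ℝ) * g₂ τ ^ (j.2 - 1) * d₂ τ) with hF'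
  -- powers bounds
  have hpow : ∀ (τ : ℝ), τ ∈ s → ∀ (g : ℝ → ℝ), (0 ≤ g τ ∧ g τ ≤ 1) → ∀ n : ℕ, |g τ ^ n| ≤ 1 := by
    intro τ hτ g hg n
    rw [abs_of_nonneg (pow_nonneg hg.1 _)]
    exact pow_le_one₀ hg.1 hg.2
  -- per-term derivative
  have hterm : ∀ j : ℕ × ℕ, ∀ τ ∈ s, HasDerivAt (F j) (F' j τ) τ := by
    intro j τ hτ
    have h1 : HasDerivAt (fun τ => a j * g₁ τ ^ j.1)
        (a j * ((j.1 : ℝ) * g₁ τ ^ (j.1 - 1) * d₁ τ)) τ :=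
      ((hg₁ τ hτ).pow j.1).const_mul (a j)
    have h2 : HasDerivAt (fun τ => g₂ τ ^ j.2) ((j.2 : ℝ) * g₂ τ ^ (j.2 - 1) * d₂ τ) τ :=
      (hg₂ τ hτ).pow j.2
    exact h1.mul h2
  -- bound on F'
  have hbound : ∀ j : ℕ × ℕ, ∀ τ ∈ s, ‖F' j τ‖ ≤ |a j| * j.1 * M + |a j| * j.2 * M := by
    intro j τ hτ
    obtain ⟨k1, k2, k3, k4⟩ := h01 τ hτ
    have e1 : |a j * ((j.1 : ℝ) * g₁ τ ^ (j.1 - 1) * d₁ τ) * g₂ τ ^ j.2| ≤ |a j| * j.1 * M := by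
      calc |a j * ((j.1 : ℝ) * g₁ τ ^ (j.1 - 1) * d₁ τ) * g₂ τ ^ j.2|
          = |a j| * ((j.1 : ℝ) * |g₁ τ ^ (j.1 - 1)| * |d₁ τ|) * |g₂ τ ^ j.2| := by
            simp [abs_mul, Nat.abs_cast, mul_assoc]
        _ ≤ |a j| * ((j.1 : ℝ) * 1 * M) * 1 := by
            gcongr <;> first
            | positivity
            | exact hpow τ hτ g₁ ⟨k1, k2⟩ _
            | exact hpow τ hτ g₂ ⟨k3, k4⟩ _
            | exact hpow t ht g₁ ⟨k1, k2⟩ _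
            | exact hpow t ht g₂ ⟨k3, k4⟩ _
            | exact hM₁ τ hτ
            | exact hM₂ τ hτ
            | exact abs_nonneg _
        _ = |a j| * j.1 * M := by ring
    have e2 : |a j * g₁ τ ^ j.1 * ((j.2 : ℝ) * g₂ τ ^ (j.2 - 1) * d₂ τ)| ≤ |a j| * j.2 * M := by
      calc |a j * g₁ τ ^ j.1 * ((j.2 : ℝ) * g₂ τ ^ (j.2 - 1) * d₂ τ)|
          = |a j| * |g₁ τ ^ j.1| * ((j.2 : ℝ) * |g₂ τ ^ (j.2 - 1)| * |d₂ τ|) := by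
            simp [abs_mul, Nat.abs_cast, mul_assoc]
        _ ≤ |a j| * 1 * ((j.2 : ℝ) * 1 * M) := by
            gcongr <;> first
            | positivity
            | exact hpow τ hτ g₁ ⟨k1, k2⟩ _
            | exact hpow τ hτ g₂ ⟨k3, k4⟩ _
            | exact hpow t ht g₁ ⟨k1, k2⟩ _
            | exact hpow t ht g₂ ⟨k3, k4⟩ _
            | exact hM₁ τ hτ
            | exact hM₂ τ hτ
            | exact abs_nonneg _
        _ = |a j| * j.2 * M := by ring
    calc ‖F' j τ‖ ≤ |a j * ((j.1 : ℝ) * g₁ τ ^ (j.1 - 1) * d₁ τ) * g₂ τ ^ j.2|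
        + |a j * g₁ τ ^ j.1 * ((j.2 : ℝ) * g₂ τ ^ (j.2 - 1) * d₂ τ)| := by
          rw [hF']; exact abs_add_le _ _
      _ ≤ |a j| * j.1 * M + |a j| * j.2 * M := add_le_add e1 e2
  have husum : Summable fun j : ℕ × ℕ => |a j| * j.1 * M + |a j| * j.2 * M :=
    (hw1.mul_right M).add (hw2.mul_right M)
  -- uniform convergence of derivative partial sums
  have hunif : TendstoUniformlyOn (fun (T : Finset (ℕ × ℕ)) τ => ∑ j ∈ T, F' j τ)
      (fun τ => ∑' j, F' j τ) atTop s :=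
    tendstoUniformlyOn_tsum husum (fun j τ hτ => hbound j τ hτ)
  have hD : HasDerivAt (fun τ => genFun a (g₁ τ, g₂ τ)) (∑' j, F' j t) t := by
    apply hasDerivAt_of_tendstoUniformlyOn hs hunif
    · exact Filter.Eventually.of_forall fun T τ hτ => HasDerivAt.sum fun j _ => hterm j τ hτ
    · intro τ hτ
      have : Summable fun j => F j τ := by
        apply Summable.of_abs
        apply habs.of_nonneg_of_le (fun j => abs_nonneg _)
        intro j
        exact term_abs_le a (u := (g₁ τ, g₂ τ)) (by
          obtain ⟨k1, k2, k3, k4⟩ := h01 τ hτ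
          exact ⟨⟨k1, k3⟩, ⟨k2, k4⟩⟩) j
      exact Tendsto.congr (fun n => (Finset.sum_apply τ n F).symm) this.hasSum
    · exact ht
  convert hD using 1
  -- split the tsum
  have hsplit : ∀ j : ℕ × ℕ, F' j t =
      (a j * j.1 * g₁ t ^ (j.1 - 1) * g₂ t ^ j.2) * d₁ t
        + (a j * j.2 * g₁ t ^ j.1 * g₂ t ^ (j.2 - 1)) * d₂ t := by
    intro j; rw [hF']; ring
  obtain ⟨k1, k2, k3, k4⟩ := h01 t ht
  have hsA : Summable fun j : ℕ × ℕ => a j * j.1 * g₁ t ^ (j.1 - 1) * g₂ t ^ j.2 := by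
    apply Summable.of_abs
    apply hw1.of_nonneg_of_le (fun j => abs_nonneg _)
    intro j
    calc |a j * j.1 * g₁ t ^ (j.1 - 1) * g₂ t ^ j.2|
        = |a j| * (j.1 : ℝ) * |g₁ t ^ (j.1 - 1)| * |g₂ t ^ j.2| := by
          simp [abs_mul, Nat.abs_cast]
      _ ≤ |a j| * (j.1 : ℝ) * 1 * 1 := by
          gcongr <;> first
            | positivity
            | exact hpow τ hτ g₁ ⟨k1, k2⟩ _
            | exact hpow τ hτ g₂ ⟨k3, k4⟩ _
            | exact hpow t ht g₁ ⟨k1, k2⟩ _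
            | exact hpow t ht g₂ ⟨k3, k4⟩ _
            | exact hM₁ τ hτ
            | exact hM₂ τ hτ
            | exact abs_nonneg _
      _ = |a j| * j.1 := by ring
  have hsB : Summable fun j : ℕ × ℕ => a j * j.2 * g₁ t ^ j.1 * g₂ t ^ (j.2 - 1) := by
    apply Summable.of_abs
    apply hw2.of_nonneg_of_le (fun j => abs_nonneg _)
    intro j
    calc |a j * j.2 * g₁ t ^ j.1 * g₂ t ^ (j.2 - 1)|
        = |a j| * (j.2 : ℝ) * |g₁ t ^ j.1| * |g₂ t ^ (j.2 - 1)| := by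
          simp [abs_mul, Nat.abs_cast]
      _ ≤ |a j| * (j.2 : ℝ) * 1 * 1 := by
          gcongr <;> first
            | positivity
            | exact hpow τ hτ g₁ ⟨k1, k2⟩ _
            | exact hpow τ hτ g₂ ⟨k3, k4⟩ _
            | exact hpow t ht g₁ ⟨k1, k2⟩ _
            | exact hpow t ht g₂ ⟨k3, k4⟩ _
            | exact hM₁ τ hτ
            | exact hM₂ τ hτ
            | exact abs_nonneg _
      _ = |a j| * j.2 := by ring
  calc (∑' j : ℕ × ℕ, a j * j.1 * g₁ t ^ (j.1 - 1) * g₂ t ^ j.2) * d₁ t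
      + (∑' j : ℕ × ℕ, a j * j.2 * g₁ t ^ j.1 * g₂ t ^ (j.2 - 1)) * d₂ t
      = (∑' j : ℕ × ℕ, (a j * j.1 * g₁ t ^ (j.1 - 1) * g₂ t ^ j.2) * d₁ t)
      + (∑' j : ℕ × ℕ, (a j * j.2 * g₁ t ^ j.1 * g₂ t ^ (j.2 - 1)) * d₂ t) := by
        rw [tsum_mul_right, tsum_mul_right]
    _ = ∑' j, F' j t := by
        rw [← Summable.tsum_add (hsA.mul_right _) (hsB.mul_right _)]
        exact tsum_congr fun j => (hsplit j).symm

open scoped Topology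

lemma slope_posPart_lt {φ : ℝ → ℝ} {D : ℝ} {x c r : ℝ} (hφ : HasDerivAt φ D x)
    (hc0 : 0 ≤ c) (hD : 0 ≤ φ x → D ≤ c) (hr : c < r) :
    ∀ᶠ z in 𝓝[>] x, (z - x)⁻¹ * (max (φ z) 0 - max (φ x) 0) < r := by
  have hr0 : (0:ℝ) < r := lt_of_le_of_lt hc0 hr
  rcases lt_or_ge (φ x) 0 with hneg | hpos
  · have hev : ∀ᶠ z in 𝓝 x, φ z < 0 := hφ.continuousAt.eventually_lt_const hneg
    filter_upwards [hev.filter_mono nhdsWithin_le_nhds] with z hz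
    rw [max_eq_right hz.le, max_eq_right hneg.le, sub_zero, mul_zero]
    exact hr0
  · have hDr : D < r := lt_of_le_of_lt (hD hpos) hr
    have hslope : Tendsto (slope φ x) (𝓝[≠] x) (𝓝 D) := hasDerivAt_iff_tendsto_slope.mp hφ
    have hslope' : Tendsto (slope φ x) (𝓝[>] x) (𝓝 D) :=
      hslope.mono_left (nhdsWithin_mono x fun z hz => ne_of_gt hz)
    have h1 : ∀ᶠ z in 𝓝[>] x, slope φ x z < r := hslope'.eventually_lt_const hDr
    filter_upwards [h1, self_mem_nhdsWithin] with z hz hzx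
    have hzx' : (0:ℝ) < z - x := sub_pos.2 hzx
    rw [max_eq_left hpos]
    rcases le_or_gt (φ z) 0 with hz0 | hz0
    · rw [max_eq_right hz0]
      have : (z - x)⁻¹ * (0 - φ x) ≤ 0 := by
        apply mul_nonpos_of_nonneg_of_nonpos (inv_nonneg.2 hzx'.le)
        linarith
      linarith
    · rw [max_eq_left hz0.le]
      have : slope φ x z = (z - x)⁻¹ * (φ z - φ x) := by
        rw [slope_def_field]; rw [div_eq_inv_mul]
      rw [← this]
      exact hz

lemma tsumA_abs_le (a : ℕ × ℕ → ℝ) (hw1 : Summable fun j : ℕ × ℕ => |a j| * j.1)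
    {u : ℝ × ℝ} (hu : u ∈ Set.Icc ((0:ℝ), (0:ℝ)) (1, 1)) :
    |∑' j : ℕ × ℕ, a j * j.1 * u.1 ^ (j.1 - 1) * u.2 ^ j.2| ≤ ∑' j : ℕ × ℕ, |a j| * j.1 := by
  obtain ⟨⟨k1, k3⟩, ⟨k2, k4⟩⟩ := hu
  apply abs_tsum_le_tsum hw1
  intro j
  have p1 : |u.1 ^ (j.1 - 1)| ≤ 1 := by
    rw [abs_of_nonneg (pow_nonneg k1 _)]; exact pow_le_one₀ k1 k2
  have p2 : |u.2 ^ j.2| ≤ 1 := by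
    rw [abs_of_nonneg (pow_nonneg k3 _)]; exact pow_le_one₀ k3 k4
  calc |a j * j.1 * u.1 ^ (j.1 - 1) * u.2 ^ j.2|
      = |a j| * (j.1 : ℝ) * |u.1 ^ (j.1 - 1)| * |u.2 ^ j.2| := by
        simp [abs_mul, Nat.abs_cast]
    _ ≤ |a j| * (j.1 : ℝ) * 1 * 1 := by
        gcongr <;> first | positivity | exact p1 | exact p2
    _ = |a j| * j.1 := by ring

lemma tsumB_abs_le (a : ℕ × ℕ → ℝ) (hw2 : Summable fun j : ℕ × ℕ => |a j| * j.2)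
    {u : ℝ × ℝ} (hu : u ∈ Set.Icc ((0:ℝ), (0:ℝ)) (1, 1)) :
    |∑' j : ℕ × ℕ, a j * j.2 * u.1 ^ j.1 * u.2 ^ (j.2 - 1)| ≤ ∑' j : ℕ × ℕ, |a j| * j.2 := by
  obtain ⟨⟨k1, k3⟩, ⟨k2, k4⟩⟩ := hu
  apply abs_tsum_le_tsum hw2
  intro j
  have p1 : |u.1 ^ j.1| ≤ 1 := by
    rw [abs_of_nonneg (pow_nonneg k1 _)]; exact pow_le_one₀ k1 k2
  have p2 : |u.2 ^ (j.2 - 1)| ≤ 1 := by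
    rw [abs_of_nonneg (pow_nonneg k3 _)]; exact pow_le_one₀ k3 k4
  calc |a j * j.2 * u.1 ^ j.1 * u.2 ^ (j.2 - 1)|
      = |a j| * (j.2 : ℝ) * |u.1 ^ j.1| * |u.2 ^ (j.2 - 1)| := by
        simp [abs_mul, Nat.abs_cast]
    _ ≤ |a j| * (j.2 : ℝ) * 1 * 1 := by
        gcongr <;> first | positivity | exact p1 | exact p2
    _ = |a j| * j.2 := by ring

lemma tsumA_nonneg (a : ℕ × ℕ → ℝ) (e : ℕ × ℕ) (ha : ∀ j, j ≠ e → 0 ≤ a j) (he : e.1 = 0)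
    {u : ℝ × ℝ} (h1 : 0 ≤ u.1) (h2 : 0 ≤ u.2) :
    0 ≤ ∑' j : ℕ × ℕ, a j * j.1 * u.1 ^ (j.1 - 1) * u.2 ^ j.2 := by
  apply tsum_nonneg
  intro j
  by_cases hj : j = e
  · subst hj; rw [he]; simp
  · have := ha j hj
    positivity

lemma tsumB_nonneg (a : ℕ × ℕ → ℝ) (e : ℕ × ℕ) (ha : ∀ j, j ≠ e → 0 ≤ a j) (he : e.2 = 0)
    {u : ℝ × ℝ} (h1 : 0 ≤ u.1) (h2 : 0 ≤ u.2) :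
    0 ≤ ∑' j : ℕ × ℕ, a j * j.2 * u.1 ^ j.1 * u.2 ^ (j.2 - 1) := by
  apply tsum_nonneg
  intro j
  by_cases hj : j = e
  · subst hj; rw [he]; simp
  · have := ha j hj
    positivity

end Helpers

set_option maxHeartbeats 2000000 in
theorem solution_decreasing_to_root (b₁ b₂ : ℕ × ℕ → ℝ)
    (hb₁ : ∀ j : ℕ × ℕ, j ≠ (1, 0) → 0 ≤ b₁ j)
    (hb₂ : ∀ j : ℕ × ℕ, j ≠ (0, 1) → 0 ≤ b₂ j)
    (hs₁ : Summable fun j : ℕ × ℕ => if j = (1, 0) then 0 else b₁ j)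
    (hs₂ : Summable fun j : ℕ × ℕ => if j = (0, 1) then 0 else b₂ j)
    (he₁ : b₁ (1, 0) = -∑' j : ℕ × ℕ, if j = (1, 0) then 0 else b₁ j)
    (he₂ : b₂ (0, 1) = -∑' j : ℕ × ℕ, if j = (0, 1) then 0 else b₂ j)
    (hA2 : (Summable fun j : ℕ × ℕ => b₁ j * (j.1 : ℝ)) ∧
      (Summable fun j : ℕ × ℕ => b₁ j * (j.2 : ℝ)) ∧
      (Summable fun j : ℕ × ℕ => b₂ j * (j.1 : ℝ)) ∧
      (Summable fun j : ℕ × ℕ => b₂ j * (j.2 : ℝ)))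
    (hA1 : ¬ ∃ M : Matrix (Fin 2) (Fin 2) ℝ, ∀ x ∈ Set.Icc ((0 : ℝ), (0 : ℝ)) (1, 1),
      genFun b₁ x = x.1 * M 0 0 + x.2 * M 1 0 ∧ genFun b₂ x = x.1 * M 0 1 + x.2 * M 1 1)
    (hA3 : ∃ m : ℕ, ∀ i j : Fin 2, 0 < ((jacMat b₁ b₂ (1, 1)) ^ m) i j)
    (R₁ R₂ : Finset (ℕ × ℕ)) (hR₁ : R₁.Nonempty) (hR₂ : R₂.Nonempty)
    (hpos₁ : ∀ j ∈ R₁, 0 < b₁ j) (hpos₂ : ∀ j ∈ R₂, 0 < b₂ j)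
    (y : {j // j ∈ R₁} → ℝ) (z : {j // j ∈ R₂} → ℝ)
    (hy : ∀ i, y i ∈ Set.Ico (0 : ℝ) 1) (hz : ∀ i, z i ∈ Set.Ico (0 : ℝ) 1)
    (x : ℝ × ℝ) (hx : x ∈ Set.Icc ((0 : ℝ), (0 : ℝ)) (1, 1))
    (q : ℝ × ℝ) (hqmem : q ∈ Set.Icc ((0 : ℝ), (0 : ℝ)) (1, 1))
    (hq₁ : Bpart b₁ R₁ q y + Bbar b₁ R₁ q = 0) (hq₂ : Bpart b₂ R₂ q z + Bbar b₂ R₂ q = 0)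
    (hquniq : ∀ x' ∈ Set.Icc ((0 : ℝ), (0 : ℝ)) (1, 1), Bpart b₁ R₁ x' y + Bbar b₁ R₁ x' = 0 →
      Bpart b₂ R₂ x' z + Bbar b₂ R₂ x' = 0 → x' = q)
    (G : ℝ → ℝ × ℝ) (hGsol : (G 0 = x) ∧
      (∀ t ∈ Set.Ici (0 : ℝ),
        HasDerivWithinAt (fun s => (G s).1)
          (Bpart b₁ R₁ (G t) y + Bbar b₁ R₁ (G t)) (Set.Ici 0) t ∧
        HasDerivWithinAt (fun s => (G s).2)
          (Bpart b₂ R₂ (G t) z + Bbar b₂ R₂ (G t)) (Set.Ici 0) t))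
    (hGmem : ∀ t ∈ Set.Ici (0 : ℝ), G t ∈ Set.Icc ((0 : ℝ), (0 : ℝ)) (1, 1))
    (hf₁x : Bpart b₁ R₁ x y + Bbar b₁ R₁ x ≤ 0)
    (hf₂x : Bpart b₂ R₂ x z + Bbar b₂ R₂ x ≤ 0) :
    (∀ t ∈ Set.Ici (0 : ℝ),
      Bpart b₁ R₁ (G t) y + Bbar b₁ R₁ (G t) ≤ 0 ∧
      Bpart b₂ R₂ (G t) z + Bbar b₂ R₂ (G t) ≤ 0) ∧
    AntitoneOn (fun t => (G t).1) (Set.Ici 0) ∧ AntitoneOn (fun t => (G t).2) (Set.Ici 0) ∧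
    Filter.Tendsto G Filter.atTop (nhds q) := by
    classical
  -- exceptional indices are not in R₁ / R₂
  have hb₁e : b₁ (1, 0) ≤ 0 := by
    rw [he₁]
    simp only [neg_nonpos]
    exact tsum_nonneg fun j => by
      by_cases hj : j = (1, 0) <;> simp [hj, hb₁ j]
  have hb₂e : b₂ (0, 1) ≤ 0 := by
    rw [he₂]
    simp only [neg_nonpos]
    exact tsum_nonneg fun j => by
      by_cases hj : j = (0, 1) <;> simp [hj, hb₂ j]
  have not10 : (1, 0) ∉ R₁ := fun h => absurd (hpos₁ _ h) (not_lt.2 hb₁e)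
  have not01 : (0, 1) ∉ R₂ := fun h => absurd (hpos₂ _ h) (not_lt.2 hb₂e)
  -- the combined coefficient families
  set a₁ : ℕ × ℕ → ℝ := fun j => if h : j ∈ R₁ then b₁ j * y ⟨j, h⟩ else b₁ j with ha₁def
  set a₂ : ℕ × ℕ → ℝ := fun j => if h : j ∈ R₂ then b₂ j * z ⟨j, h⟩ else b₂ j with ha₂def
  -- summability facts
  have habsb₁ : Summable fun j => |b₁ j| := summable_abs_of_modified b₁ (1, 0) hb₁ hs₁
  have habsb₂ : Summable fun j => |b₂ j| := summable_abs_of_modified b₂ (0, 1) hb₂ hs₂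
  have ha₁le : ∀ j, |a₁ j| ≤ |b₁ j| := by
    intro j
    by_cases h : j ∈ R₁
    · rw [ha₁def]; simp only [dif_pos h, abs_mul]
      apply mul_le_of_le_one_right (abs_nonneg _)
      rw [abs_of_nonneg (hy ⟨j, h⟩).1]
      exact (hy ⟨j, h⟩).2.le
    · rw [ha₁def]; simp only [dif_neg h]; exact le_refl _
  have ha₂le : ∀ j, |a₂ j| ≤ |b₂ j| := by
    intro j
    by_cases h : j ∈ R₂
    · rw [ha₂def]; simp only [dif_pos h, abs_mul]
      apply mul_le_of_le_one_right (abs_nonneg _)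
      rw [abs_of_nonneg (hz ⟨j, h⟩).1]
      exact (hz ⟨j, h⟩).2.le
    · rw [ha₂def]; simp only [dif_neg h]; exact le_refl _
  have habs₁ : Summable fun j => |a₁ j| :=
    habsb₁.of_nonneg_of_le (fun j => abs_nonneg _) ha₁le
  have habs₂ : Summable fun j => |a₂ j| :=
    habsb₂.of_nonneg_of_le (fun j => abs_nonneg _) ha₂le
  have hw1₁ : Summable fun j : ℕ × ℕ => |a₁ j| * j.1 :=
    (summable_abs_mul_of_modified b₁ (1, 0) (fun j => (j.1 : ℝ)) hb₁
      (fun j => Nat.cast_nonneg _) hA2.1).of_nonneg_of_le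
      (fun j => by positivity)
      (fun j => mul_le_mul_of_nonneg_right (ha₁le j) (Nat.cast_nonneg _))
  have hw2₁ : Summable fun j : ℕ × ℕ => |a₁ j| * j.2 :=
    (summable_abs_mul_of_modified b₁ (1, 0) (fun j => (j.2 : ℝ)) hb₁
      (fun j => Nat.cast_nonneg _) hA2.2.1).of_nonneg_of_le
      (fun j => by positivity)
      (fun j => mul_le_mul_of_nonneg_right (ha₁le j) (Nat.cast_nonneg _))
  have hw1₂ : Summable fun j : ℕ × ℕ => |a₂ j| * j.1 :=
    (summable_abs_mul_of_modified b₂ (0, 1) (fun j => (j.1 : ℝ)) hb₂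
      (fun j => Nat.cast_nonneg _) hA2.2.2.1).of_nonneg_of_le
      (fun j => by positivity)
      (fun j => mul_le_mul_of_nonneg_right (ha₂le j) (Nat.cast_nonneg _))
  have hw2₂ : Summable fun j : ℕ × ℕ => |a₂ j| * j.2 :=
    (summable_abs_mul_of_modified b₂ (0, 1) (fun j => (j.2 : ℝ)) hb₂
      (fun j => Nat.cast_nonneg _) hA2.2.2.2).of_nonneg_of_le
      (fun j => by positivity)
      (fun j => mul_le_mul_of_nonneg_right (ha₂le j) (Nat.cast_nonneg _))
  -- sign facts
  have ha₁pos : ∀ j, j ≠ (1, 0) → 0 ≤ a₁ j := by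
    intro j hj
    by_cases h : j ∈ R₁
    · rw [ha₁def]; simp only [dif_pos h]
      exact mul_nonneg (hpos₁ j h).le (hy ⟨j, h⟩).1
    · rw [ha₁def]; simp only [dif_neg h]; exact hb₁ j hj
  have ha₂pos : ∀ j, j ≠ (0, 1) → 0 ≤ a₂ j := by
    intro j hj
    by_cases h : j ∈ R₂
    · rw [ha₂def]; simp only [dif_pos h]
      exact mul_nonneg (hpos₂ j h).le (hz ⟨j, h⟩).1
    · rw [ha₂def]; simp only [dif_neg h]; exact hb₂ j hj
  -- the identity
  have hId₁ : ∀ u ∈ Set.Icc ((0:ℝ), (0:ℝ)) (1, 1),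
      Bpart b₁ R₁ u y + Bbar b₁ R₁ u = genFun a₁ u :=
    fun u hu => Bpart_add_Bbar_eq b₁ R₁ y habsb₁ hu
  have hId₂ : ∀ u ∈ Set.Icc ((0:ℝ), (0:ℝ)) (1, 1),
      Bpart b₂ R₂ u z + Bbar b₂ R₂ u = genFun a₂ u :=
    fun u hu => Bpart_add_Bbar_eq b₂ R₂ z habsb₂ hu
  -- the composed functions
  set φ₁ : ℝ → ℝ := fun t => genFun a₁ ((G t).1, (G t).2) with hφ₁def
  set φ₂ : ℝ → ℝ := fun t => genFun a₂ ((G t).1, (G t).2) with hφ₂def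
  have heta : ∀ t, ((G t).1, (G t).2) = G t := fun t => Prod.mk.eta
  -- derivative of G within Ici 0
  have hD₁ : ∀ t ∈ Set.Ici (0:ℝ),
      HasDerivWithinAt (fun s => (G s).1) (φ₁ t) (Set.Ici 0) t := by
    intro t ht
    have h := (hGsol.2 t ht).1
    rw [hId₁ (G t) (hGmem t ht)] at h
    exact h
  have hD₂ : ∀ t ∈ Set.Ici (0:ℝ),
      HasDerivWithinAt (fun s => (G s).2) (φ₂ t) (Set.Ici 0) t := by
    intro t ht
    have h := (hGsol.2 t ht).2
    rw [hId₂ (G t) (hGmem t ht)] at h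
    exact h
  -- continuity
  have hGcont1 : ContinuousOn (fun t => (G t).1) (Set.Ici (0:ℝ)) :=
    fun t ht => (hD₁ t ht).continuousWithinAt
  have hGcont2 : ContinuousOn (fun t => (G t).2) (Set.Ici (0:ℝ)) :=
    fun t ht => (hD₂ t ht).continuousWithinAt
  have hGcont : ContinuousOn (fun t => ((G t).1, (G t).2)) (Set.Ici (0:ℝ)) :=
    hGcont1.prodMk hGcont2
  have hGmem' : ∀ t ∈ Set.Ici (0:ℝ), ((G t).1, (G t).2) ∈ Set.Icc ((0:ℝ), (0:ℝ)) (1, 1) := by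
    intro t ht; rw [heta t]; exact hGmem t ht
  have hφ₁cont : ContinuousOn φ₁ (Set.Ici (0:ℝ)) :=
    (continuousOn_genFun a₁ habs₁).comp hGcont hGmem'
  have hφ₂cont : ContinuousOn φ₂ (Set.Ici (0:ℝ)) :=
    (continuousOn_genFun a₂ habs₂).comp hGcont hGmem'
  -- uniform bound on φ
  set M : ℝ := (∑' j, |a₁ j|) + (∑' j, |a₂ j|) with hMdef
  have htsum₁nonneg : 0 ≤ ∑' j, |a₁ j| := tsum_nonneg fun j => abs_nonneg _
  have htsum₂nonneg : 0 ≤ ∑' j, |a₂ j| := tsum_nonneg fun j => abs_nonneg _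
  have hMb₁ : ∀ t ∈ Set.Ici (0:ℝ), |φ₁ t| ≤ M := fun t ht =>
    le_trans (genFun_abs_le a₁ habs₁ (hGmem' t ht)) (by rw [hMdef]; linarith)
  have hMb₂ : ∀ t ∈ Set.Ici (0:ℝ), |φ₂ t| ≤ M := fun t ht =>
    le_trans (genFun_abs_le a₂ habs₂ (hGmem' t ht)) (by rw [hMdef]; linarith)
  -- genuine derivatives of G on the interior
  have hDA₁ : ∀ t ∈ Set.Ioi (0:ℝ), HasDerivAt (fun s => (G s).1) (φ₁ t) t := by
    intro t ht
    exact (hD₁ t (Set.mem_Ici.2 (Set.mem_Ioi.1 ht).le)).hasDerivAt (Ici_mem_nhds ht)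
  have hDA₂ : ∀ t ∈ Set.Ioi (0:ℝ), HasDerivAt (fun s => (G s).2) (φ₂ t) t := by
    intro t ht
    exact (hD₂ t (Set.mem_Ici.2 (Set.mem_Ioi.1 ht).le)).hasDerivAt (Ici_mem_nhds ht)
  have h01 : ∀ t ∈ Set.Ioi (0:ℝ),
      0 ≤ (G t).1 ∧ (G t).1 ≤ 1 ∧ 0 ≤ (G t).2 ∧ (G t).2 ≤ 1 := by
    intro t ht
    obtain ⟨⟨k1, k3⟩, ⟨k2, k4⟩⟩ := hGmem t (Set.mem_Ici.2 (Set.mem_Ioi.1 ht).le)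
    exact ⟨k1, k2, k3, k4⟩
  -- derivative of φ on the interior
  set At₁ : ℝ → ℝ := fun t => ∑' j : ℕ × ℕ, a₁ j * j.1 * (G t).1 ^ (j.1 - 1) * (G t).2 ^ j.2
    with hAt₁def
  set Bt₁ : ℝ → ℝ := fun t => ∑' j : ℕ × ℕ, a₁ j * j.2 * (G t).1 ^ j.1 * (G t).2 ^ (j.2 - 1)
    with hBt₁def
  set At₂ : ℝ → ℝ := fun t => ∑' j : ℕ × ℕ, a₂ j * j.1 * (G t).1 ^ (j.1 - 1) * (G t).2 ^ j.2
    with hAt₂def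
  set Bt₂ : ℝ → ℝ := fun t => ∑' j : ℕ × ℕ, a₂ j * j.2 * (G t).1 ^ j.1 * (G t).2 ^ (j.2 - 1)
    with hBt₂def
  have hφ₁D : ∀ t ∈ Set.Ioi (0:ℝ),
      HasDerivAt φ₁ (At₁ t * φ₁ t + Bt₁ t * φ₂ t) t := by
    intro t ht
    exact hasDerivAt_genFun_comp a₁ habs₁ hw1₁ hw2₁ (fun s => (G s).1) (fun s => (G s).2)
      φ₁ φ₂ isOpen_Ioi M hDA₁ hDA₂ h01 (fun τ hτ => hMb₁ τ (Set.mem_Ici.2 (Set.mem_Ioi.1 hτ).le))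
      (fun τ hτ => hMb₂ τ (Set.mem_Ici.2 (Set.mem_Ioi.1 hτ).le)) ht
  have hφ₂D : ∀ t ∈ Set.Ioi (0:ℝ),
      HasDerivAt φ₂ (At₂ t * φ₁ t + Bt₂ t * φ₂ t) t := by
    intro t ht
    exact hasDerivAt_genFun_comp a₂ habs₂ hw1₂ hw2₂ (fun s => (G s).1) (fun s => (G s).2)
      φ₁ φ₂ isOpen_Ioi M hDA₁ hDA₂ h01 (fun τ hτ => hMb₁ τ (Set.mem_Ici.2 (Set.mem_Ioi.1 hτ).le))
      (fun τ hτ => hMb₂ τ (Set.mem_Ici.2 (Set.mem_Ioi.1 hτ).le)) ht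
  -- the Lipschitz-type constant
  set K : ℝ := (∑' j : ℕ × ℕ, |a₁ j| * j.1) + (∑' j : ℕ × ℕ, |a₁ j| * j.2)
    + (∑' j : ℕ × ℕ, |a₂ j| * j.1) + (∑' j : ℕ × ℕ, |a₂ j| * j.2) with hKdef
  have hK11 : 0 ≤ ∑' j : ℕ × ℕ, |a₁ j| * j.1 := tsum_nonneg fun j => by positivity
  have hK12 : 0 ≤ ∑' j : ℕ × ℕ, |a₁ j| * j.2 := tsum_nonneg fun j => by positivity
  have hK21 : 0 ≤ ∑' j : ℕ × ℕ, |a₂ j| * j.1 := tsum_nonneg fun j => by positivity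
  have hK22 : 0 ≤ ∑' j : ℕ × ℕ, |a₂ j| * j.2 := tsum_nonneg fun j => by positivity
  have hK0 : 0 ≤ K := by rw [hKdef]; linarith
  -- bounds on the coefficient functions, for t > 0
  have hAt₁b : ∀ t ∈ Set.Ioi (0:ℝ), |At₁ t| ≤ K := by
    intro t ht
    refine le_trans (tsumA_abs_le a₁ hw1₁ (hGmem' t (Set.mem_Ici.2 (Set.mem_Ioi.1 ht).le))) ?_
    rw [hKdef]; linarith
  have hBt₂b : ∀ t ∈ Set.Ioi (0:ℝ), |Bt₂ t| ≤ K := by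
    intro t ht
    refine le_trans (tsumB_abs_le a₂ hw2₂ (hGmem' t (Set.mem_Ici.2 (Set.mem_Ioi.1 ht).le))) ?_
    rw [hKdef]; linarith
  have hBt₁nn : ∀ t ∈ Set.Ioi (0:ℝ), 0 ≤ Bt₁ t := by
    intro t ht
    obtain ⟨k1, _, k3, _⟩ := h01 t ht
    exact tsumB_nonneg a₁ (1, 0) ha₁pos rfl (u := ((G t).1, (G t).2)) k1 k3
  have hAt₂nn : ∀ t ∈ Set.Ioi (0:ℝ), 0 ≤ At₂ t := by
    intro t ht
    obtain ⟨k1, _, k3, _⟩ := h01 t ht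
    exact tsumA_nonneg a₂ (0, 1) ha₂pos rfl (u := ((G t).1, (G t).2)) k1 k3
  have hBt₁b : ∀ t ∈ Set.Ioi (0:ℝ), Bt₁ t ≤ K := by
    intro t ht
    refine le_trans (le_abs_self _) (le_trans (tsumB_abs_le a₁ hw2₁ (hGmem' t (Set.mem_Ici.2 (Set.mem_Ioi.1 ht).le))) ?_)
    rw [hKdef]; linarith
  have hAt₂b : ∀ t ∈ Set.Ioi (0:ℝ), At₂ t ≤ K := by
    intro t ht
    refine le_trans (le_abs_self _) (le_trans (tsumA_abs_le a₂ hw1₂ (hGmem' t (Set.mem_Ici.2 (Set.mem_Ioi.1 ht).le))) ?_)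
    rw [hKdef]; linarith
  -- the function w
  set w : ℝ → ℝ := fun t => max (φ₁ t) 0 + max (φ₂ t) 0 with hwdef
  have hwnn : ∀ t, 0 ≤ w t := fun t => add_nonneg (le_max_right _ _) (le_max_right _ _)
  have hwcont : ContinuousOn w (Set.Ici (0:ℝ)) := fun t ht =>
    ((hφ₁cont t ht).max continuousWithinAt_const).add ((hφ₂cont t ht).max continuousWithinAt_const)
  have hφ₁0 : φ₁ 0 ≤ 0 := by
    have h := hf₁x
    rw [← hGsol.1] at h
    rwa [hId₁ (G 0) (hGmem 0 Set.self_mem_Ici)] at h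
  have hφ₂0 : φ₂ 0 ≤ 0 := by
    have h := hf₂x
    rw [← hGsol.1] at h
    rwa [hId₂ (G 0) (hGmem 0 Set.self_mem_Ici)] at h
  have hw0 : w 0 = 0 := by
    rw [hwdef]
    simp only [max_eq_right hφ₁0, max_eq_right hφ₂0, add_zero]
  -- the differential inequality: derivative of φᵢ bounded by K * w when φᵢ ≥ 0
  have hineq₁ : ∀ t ∈ Set.Ioi (0:ℝ), 0 ≤ φ₁ t → At₁ t * φ₁ t + Bt₁ t * φ₂ t ≤ K * w t := by
    intro t ht hpos
    have e1 : At₁ t * φ₁ t ≤ K * max (φ₁ t) 0 := by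
      rw [max_eq_left hpos]
      calc At₁ t * φ₁ t ≤ |At₁ t| * φ₁ t := mul_le_mul_of_nonneg_right (le_abs_self _) hpos
        _ ≤ K * φ₁ t := mul_le_mul_of_nonneg_right (hAt₁b t ht) hpos
    have e2 : Bt₁ t * φ₂ t ≤ K * max (φ₂ t) 0 :=
      calc Bt₁ t * φ₂ t ≤ Bt₁ t * max (φ₂ t) 0 :=
            mul_le_mul_of_nonneg_left (le_max_left _ _) (hBt₁nn t ht)
        _ ≤ K * max (φ₂ t) 0 :=
            mul_le_mul_of_nonneg_right (hBt₁b t ht) (le_max_right _ _)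
    calc At₁ t * φ₁ t + Bt₁ t * φ₂ t ≤ K * max (φ₁ t) 0 + K * max (φ₂ t) 0 := add_le_add e1 e2
      _ = K * w t := by rw [hwdef]; ring
  have hineq₂ : ∀ t ∈ Set.Ioi (0:ℝ), 0 ≤ φ₂ t → At₂ t * φ₁ t + Bt₂ t * φ₂ t ≤ K * w t := by
    intro t ht hpos
    have e2 : Bt₂ t * φ₂ t ≤ K * max (φ₂ t) 0 := by
      rw [max_eq_left hpos]
      calc Bt₂ t * φ₂ t ≤ |Bt₂ t| * φ₂ t := mul_le_mul_of_nonneg_right (le_abs_self _) hpos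
        _ ≤ K * φ₂ t := mul_le_mul_of_nonneg_right (hBt₂b t ht) hpos
    have e1 : At₂ t * φ₁ t ≤ K * max (φ₁ t) 0 :=
      calc At₂ t * φ₁ t ≤ At₂ t * max (φ₁ t) 0 :=
            mul_le_mul_of_nonneg_left (le_max_left _ _) (hAt₂nn t ht)
        _ ≤ K * max (φ₁ t) 0 :=
            mul_le_mul_of_nonneg_right (hAt₂b t ht) (le_max_right _ _)
    calc At₂ t * φ₁ t + Bt₂ t * φ₂ t ≤ K * max (φ₁ t) 0 + K * max (φ₂ t) 0 := add_le_add e1 e2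
      _ = K * w t := by rw [hwdef]; ring
  -- the slope condition for Gronwall
  have hslope : ∀ T : ℝ, ∀ x' ∈ Set.Ico (0:ℝ) T, 0 < x' → ∀ r, 2 * K * w x' < r →
      ∃ᶠ z' in nhdsWithin x' (Set.Ioi x'), (z' - x')⁻¹ * (w z' - w x') < r := by
    intro T x' hx' hx'0 r hr
    have hKw : 0 ≤ K * w x' := mul_nonneg hK0 (hwnn x')
    have hr2 : K * w x' < r / 2 := by
      have h2 : 2 * K * w x' = 2 * (K * w x') := by ring
      rw [h2] at hr
      rw [lt_div_iff₀ (by norm_num : (0:ℝ) < 2), mul_comm]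
      exact hr
    have s1 := slope_posPart_lt (hφ₁D x' hx'0) hKw
      (fun hp => hineq₁ x' hx'0 hp) hr2
    have s2 := slope_posPart_lt (hφ₂D x' hx'0) hKw
      (fun hp => hineq₂ x' hx'0 hp) hr2
    apply Filter.Eventually.frequently
    filter_upwards [s1, s2] with z' h1 h2
    have hsum : (z' - x')⁻¹ * (w z' - w x') =
        (z' - x')⁻¹ * (max (φ₁ z') 0 - max (φ₁ x') 0)
          + (z' - x')⁻¹ * (max (φ₂ z') 0 - max (φ₂ x') 0) := by
      rw [hwdef]; ring
    rw [hsum]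
    linarith
  -- w vanishes on [0, ∞)
  have main1 : ∀ t ∈ Set.Ici (0:ℝ), w t ≤ 0 := by
    intro t ht
    rcases eq_or_lt_of_le (Set.mem_Ici.1 ht) with h0 | hpos
    · rw [← h0, hw0]
    · have hc : ∀ c ∈ Set.Ioc (0:ℝ) t, w t ≤ w c * Real.exp (2 * K * t) := by
        intro c hc
        have hgron := le_gronwallBound_of_liminf_deriv_right_le
          (f := w) (f' := fun s => 2 * K * w s) (δ := w c) (K := 2 * K) (ε := 0)
          (a := c) (b := t)
          (hwcont.mono fun s hs => le_trans hc.1.le hs.1)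
          (fun x' hx' r hr => hslope t x' ⟨le_trans hc.1.le hx'.1, hx'.2⟩
            (lt_of_lt_of_le hc.1 hx'.1) r hr)
          (le_refl (w c))
          (fun x' _ => by simp)
        have h := hgron t ⟨hc.2, le_refl t⟩
        rw [gronwallBound_ε0] at h
        calc w t ≤ w c * Real.exp (2 * K * (t - c)) := h
          _ ≤ w c * Real.exp (2 * K * t) := by
              apply mul_le_mul_of_nonneg_left _ (hwnn c)
              apply Real.exp_le_exp.2
              nlinarith [hc.1, hK0]
      have hlim : Filter.Tendsto (fun c => w c * Real.exp (2 * K * t))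
          (nhdsWithin 0 (Set.Ioi (0:ℝ))) (nhds 0) := by
        have hw0' : Filter.Tendsto w (nhdsWithin 0 (Set.Ioi (0:ℝ))) (nhds (w 0)) :=
          (hwcont 0 Set.self_mem_Ici).mono_left (nhdsWithin_mono 0 fun s hs => Set.mem_Ici.2 (Set.mem_Ioi.1 hs).le)
        rw [hw0] at hw0'
        simpa using hw0'.mul_const (Real.exp (2 * K * t))
      refine ge_of_tendsto hlim ?_
      filter_upwards [Ioc_mem_nhdsGT_of_mem ⟨le_refl 0, hpos⟩] with c hcmem
      exact hc c hcmem
  have part1 : ∀ t ∈ Set.Ici (0:ℝ), φ₁ t ≤ 0 ∧ φ₂ t ≤ 0 := by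
    intro t ht
    have h := main1 t ht
    constructor
    · have : max (φ₁ t) 0 ≤ 0 := le_trans (le_add_of_nonneg_right (le_max_right _ _)) h
      exact le_trans (le_max_left _ _) this
    · have : max (φ₂ t) 0 ≤ 0 := le_trans (le_add_of_nonneg_left (le_max_right _ _)) h
      exact le_trans (le_max_left _ _) this
  -- Part 2: antitone components
  have ant₁ : AntitoneOn (fun t => (G t).1) (Set.Ici (0:ℝ)) := by
    apply antitoneOn_of_hasDerivWithinAt_nonpos (convex_Ici 0) hGcont1
      (f' := φ₁)
    · intro s hs
      rw [interior_Ici] at hs ⊢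
      exact ((hDA₁ s hs).hasDerivWithinAt)
    · intro s hs
      rw [interior_Ici] at hs
      exact (part1 s (Set.mem_Ici.2 (Set.mem_Ioi.1 hs).le)).1
  have ant₂ : AntitoneOn (fun t => (G t).2) (Set.Ici (0:ℝ)) := by
    apply antitoneOn_of_hasDerivWithinAt_nonpos (convex_Ici 0) hGcont2
      (f' := φ₂)
    · intro s hs
      rw [interior_Ici] at hs ⊢
      exact ((hDA₂ s hs).hasDerivWithinAt)
    · intro s hs
      rw [interior_Ici] at hs
      exact (part1 s (Set.mem_Ici.2 (Set.mem_Ioi.1 hs).le)).2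
  -- Part 3: convergence
  set H₁ : ℝ → ℝ := fun t => (G (max t 0)).1 with hH₁def
  set H₂ : ℝ → ℝ := fun t => (G (max t 0)).2 with hH₂def
  have hH₁ant : Antitone H₁ := fun s t hst =>
    ant₁ (Set.mem_Ici.2 (le_max_right s 0)) (Set.mem_Ici.2 (le_max_right t 0))
      (max_le_max hst (le_refl 0))
  have hH₂ant : Antitone H₂ := fun s t hst =>
    ant₂ (Set.mem_Ici.2 (le_max_right s 0)) (Set.mem_Ici.2 (le_max_right t 0))
      (max_le_max hst (le_refl 0))
  have hH₁bdd : BddBelow (Set.range H₁) := by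
    refine ⟨0, ?_⟩
    rintro v ⟨t, rfl⟩
    exact (hGmem (max t 0) (Set.mem_Ici.2 (le_max_right t 0))).1.1
  have hH₂bdd : BddBelow (Set.range H₂) := by
    refine ⟨0, ?_⟩
    rintro v ⟨t, rfl⟩
    exact (hGmem (max t 0) (Set.mem_Ici.2 (le_max_right t 0))).1.2
  have hlimH₁ : Filter.Tendsto H₁ Filter.atTop (nhds (⨅ t, H₁ t)) :=
    tendsto_atTop_ciInf hH₁ant hH₁bdd
  have hlimH₂ : Filter.Tendsto H₂ Filter.atTop (nhds (⨅ t, H₂ t)) :=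
    tendsto_atTop_ciInf hH₂ant hH₂bdd
  set L₁ : ℝ := ⨅ t, H₁ t with hL₁def
  set L₂ : ℝ := ⨅ t, H₂ t with hL₂def
  have heq₁ : (fun t => (G t).1) =ᶠ[Filter.atTop] H₁ :=
    (Filter.eventually_ge_atTop (0:ℝ)).mono fun t ht => by
      rw [hH₁def]; simp only [max_eq_left ht]
  have heq₂ : (fun t => (G t).2) =ᶠ[Filter.atTop] H₂ :=
    (Filter.eventually_ge_atTop (0:ℝ)).mono fun t ht => by
      rw [hH₂def]; simp only [max_eq_left ht]
  have hlimG₁ : Filter.Tendsto (fun t => (G t).1) Filter.atTop (nhds L₁) :=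
    hlimH₁.congr' heq₁.symm
  have hlimG₂ : Filter.Tendsto (fun t => (G t).2) Filter.atTop (nhds L₂) :=
    hlimH₂.congr' heq₂.symm
  have hlimG : Filter.Tendsto G Filter.atTop (nhds (L₁, L₂)) := by
    have h := hlimG₁.prodMk_nhds hlimG₂
    have he : (fun t => ((G t).1, (G t).2)) = G := funext fun t => heta t
    rwa [he] at h
  -- the limit is in the unit square
  have hLmem : (L₁, L₂) ∈ Set.Icc ((0:ℝ), (0:ℝ)) (1, 1) := by
    constructor
    · constructor
      · exact ge_of_tendsto hlimG₁ ((Filter.eventually_ge_atTop (0:ℝ)).mono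
          fun t ht => (hGmem t ht).1.1)
      · exact ge_of_tendsto hlimG₂ ((Filter.eventually_ge_atTop (0:ℝ)).mono
          fun t ht => (hGmem t ht).1.2)
    · constructor
      · exact le_of_tendsto hlimG₁ ((Filter.eventually_ge_atTop (0:ℝ)).mono
          fun t ht => (hGmem t ht).2.1)
      · exact le_of_tendsto hlimG₂ ((Filter.eventually_ge_atTop (0:ℝ)).mono
          fun t ht => (hGmem t ht).2.2)
  -- φ converges to the value at the limit
  have hmemev : ∀ᶠ t in Filter.atTop, G t ∈ Set.Icc ((0:ℝ), (0:ℝ)) (1, 1) :=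
    (Filter.eventually_ge_atTop (0:ℝ)).mono fun t ht => hGmem t ht
  have hGin : Filter.Tendsto G Filter.atTop
      (nhdsWithin (L₁, L₂) (Set.Icc ((0:ℝ), (0:ℝ)) (1, 1))) :=
    tendsto_nhdsWithin_iff.mpr ⟨hlimG, hmemev⟩
  have hφ₁lim : Filter.Tendsto φ₁ Filter.atTop (nhds (genFun a₁ (L₁, L₂))) := by
    have h := ((continuousOn_genFun a₁ habs₁) (L₁, L₂) hLmem).tendsto.comp hGin
    have he : genFun a₁ ∘ G = φ₁ := funext fun t => by
      rw [hφ₁def]; simp only [Function.comp_apply, heta t]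
    rwa [he] at h
  have hφ₂lim : Filter.Tendsto φ₂ Filter.atTop (nhds (genFun a₂ (L₁, L₂))) := by
    have h := ((continuousOn_genFun a₂ habs₂) (L₁, L₂) hLmem).tendsto.comp hGin
    have he : genFun a₂ ∘ G = φ₂ := funext fun t => by
      rw [hφ₂def]; simp only [Function.comp_apply, heta t]
    rwa [he] at h
  -- the limiting values vanish
  have hzero₁ : genFun a₁ (L₁, L₂) = 0 := by
    by_contra hne
    have hle : genFun a₁ (L₁, L₂) ≤ 0 := le_of_tendsto hφ₁lim
      ((Filter.eventually_ge_atTop (0:ℝ)).mono fun t ht => (part1 t ht).1)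
    have hlt : genFun a₁ (L₁, L₂) < 0 := lt_of_le_of_ne hle hne
    set c : ℝ := genFun a₁ (L₁, L₂) with hcdef
    have hcne : c ≠ 0 := ne_of_lt hlt
    have hev : ∀ᶠ t in Filter.atTop, φ₁ t < c / 2 :=
      hφ₁lim.eventually_lt_const (by linarith)
    obtain ⟨T0, hT0⟩ := Filter.eventually_atTop.1 hev
    set T : ℝ := max T0 0 with hTdef
    have hT0' : (0:ℝ) ≤ T := le_max_right _ _
    have hφlt : ∀ t, T ≤ t → φ₁ t < c / 2 := fun t ht =>
      hT0 t (le_trans (le_max_left _ _) ht)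
    set ψ : ℝ → ℝ := fun τ => (G τ).1 - c / 2 * τ with hψdef
    have hψant : AntitoneOn ψ (Set.Ici T) := by
      apply antitoneOn_of_hasDerivWithinAt_nonpos (convex_Ici T)
        (f' := fun τ => φ₁ τ - c / 2)
      · exact (hGcont1.mono fun s hs => le_trans hT0' hs).sub
          (continuous_const.mul continuous_id).continuousOn
      · intro s hs
        rw [interior_Ici] at hs ⊢
        have hs0 : (0:ℝ) < s := lt_of_le_of_lt hT0' hs
        have hlin : HasDerivAt (fun τ : ℝ => c / 2 * τ) (c / 2) s := by
          simpa using (hasDerivAt_id s).const_mul (c / 2)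
        exact ((hDA₁ s hs0).sub hlin).hasDerivWithinAt
      · intro s hs
        rw [interior_Ici] at hs
        have := hφlt s hs.le
        linarith
    set d : ℝ := (G T).1 with hddef
    set t1 : ℝ := T + 2 / (-c) * (d + 1) with ht1def
    have hdnn : 0 ≤ d := (hGmem T hT0').1.1
    have hcpos : 0 < -c := by linarith
    have ht1ge : T ≤ t1 := by
      rw [ht1def]
      have : 0 ≤ 2 / (-c) * (d + 1) := by positivity
      linarith
    have hψle := hψant Set.self_mem_Ici (Set.mem_Ici.2 ht1ge) ht1ge
    have hkey : c / 2 * (t1 - T) = -(d + 1) := by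
      rw [ht1def]
      field_simp
      ring
    have hGt1 : 0 ≤ (G t1).1 := (hGmem t1 (le_trans hT0' ht1ge)).1.1
    rw [hψdef] at hψle
    simp only at hψle
    clear_value c T d t1
    linarith [hψle, hkey, hGt1]
  have hzero₂ : genFun a₂ (L₁, L₂) = 0 := by
    by_contra hne
    have hle : genFun a₂ (L₁, L₂) ≤ 0 := le_of_tendsto hφ₂lim
      ((Filter.eventually_ge_atTop (0:ℝ)).mono fun t ht => (part1 t ht).2)
    have hlt : genFun a₂ (L₁, L₂) < 0 := lt_of_le_of_ne hle hne
    set c : ℝ := genFun a₂ (L₁, L₂) with hcdef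
    have hcne : c ≠ 0 := ne_of_lt hlt
    have hev : ∀ᶠ t in Filter.atTop, φ₂ t < c / 2 :=
      hφ₂lim.eventually_lt_const (by linarith)
    obtain ⟨T0, hT0⟩ := Filter.eventually_atTop.1 hev
    set T : ℝ := max T0 0 with hTdef
    have hT0' : (0:ℝ) ≤ T := le_max_right _ _
    have hφlt : ∀ t, T ≤ t → φ₂ t < c / 2 := fun t ht =>
      hT0 t (le_trans (le_max_left _ _) ht)
    set ψ : ℝ → ℝ := fun τ => (G τ).2 - c / 2 * τ with hψdef
    have hψant : AntitoneOn ψ (Set.Ici T) := by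
      apply antitoneOn_of_hasDerivWithinAt_nonpos (convex_Ici T)
        (f' := fun τ => φ₂ τ - c / 2)
      · exact (hGcont2.mono fun s hs => le_trans hT0' hs).sub
          (continuous_const.mul continuous_id).continuousOn
      · intro s hs
        rw [interior_Ici] at hs ⊢
        have hs0 : (0:ℝ) < s := lt_of_le_of_lt hT0' hs
        have hlin : HasDerivAt (fun τ : ℝ => c / 2 * τ) (c / 2) s := by
          simpa using (hasDerivAt_id s).const_mul (c / 2)
        exact ((hDA₂ s hs0).sub hlin).hasDerivWithinAt
      · intro s hs
        rw [interior_Ici] at hs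
        have := hφlt s hs.le
        linarith
    set d : ℝ := (G T).2 with hddef
    set t1 : ℝ := T + 2 / (-c) * (d + 1) with ht1def
    have hdnn : 0 ≤ d := (hGmem T hT0').1.2
    have hcpos : 0 < -c := by linarith
    have ht1ge : T ≤ t1 := by
      rw [ht1def]
      have : 0 ≤ 2 / (-c) * (d + 1) := by positivity
      linarith
    have hψle := hψant Set.self_mem_Ici (Set.mem_Ici.2 ht1ge) ht1ge
    have hkey : c / 2 * (t1 - T) = -(d + 1) := by
      rw [ht1def]
      field_simp
      ring
    have hGt1 : 0 ≤ (G t1).2 := (hGmem t1 (le_trans hT0' ht1ge)).1.2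
    rw [hψdef] at hψle
    simp only at hψle
    clear_value c T d t1
    linarith [hψle, hkey, hGt1]
  have hq' : (L₁, L₂) = q :=
    hquniq (L₁, L₂) hLmem
      (by rw [hId₁ _ hLmem]; exact hzero₁)
      (by rw [hId₂ _ hLmem]; exact hzero₂)
  refine ⟨fun t ht => ⟨?_, ?_⟩, ant₁, ant₂, ?_⟩
  · rw [hId₁ _ (hGmem t ht)]
    exact (part1 t ht).1
  · rw [hId₂ _ (hGmem t ht)]
    exact (part1 t ht).2
  · rw [← hq']
    exact hlimG
end

section
/- Let p, α ∈ (0,1), q = 1 − p, β = 1 − α, and let y, z ∈ [0,1). Then the system of equations q v² − u + p y = 0, β u − v + α z = 0 has exactly one solution (u,v) in [0,1]², and it is given by u = (1/(2qβ²))[1 − √(1 − 4qβ(pβy + αz))] − αz/β and v = (1/(2qβ))[1 − √(1 − 4qβ(pβy + αz))]. -/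
open scoped BigOperators

set_option maxHeartbeats 2000000 in
theorem example_unique_root (p α y z : ℝ)
    (hp : p ∈ Set.Ioo (0 : ℝ) 1) (hα : α ∈ Set.Ioo (0 : ℝ) 1)
    (hy : y ∈ Set.Ico (0 : ℝ) 1) (hz : z ∈ Set.Ico (0 : ℝ) 1) :
    ∀ uv : ℝ × ℝ,
      (uv ∈ Set.Icc ((0 : ℝ), (0 : ℝ)) (1, 1) ∧
        (1 - p) * uv.2 ^ 2 - uv.1 + p * y = 0 ∧ (1 - α) * uv.1 - uv.2 + α * z = 0) ↔
      uv = (1 / (2 * (1 - p) * (1 - α) ^ 2) *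
              (1 - Real.sqrt (1 - 4 * (1 - p) * (1 - α) * (p * (1 - α) * y + α * z))) -
              α * z / (1 - α),
            1 / (2 * (1 - p) * (1 - α)) *
              (1 - Real.sqrt (1 - 4 * (1 - p) * (1 - α) * (p * (1 - α) * y + α * z)))) := by
  obtain ⟨hp0, hp1⟩ := hp
  obtain ⟨hα0, hα1⟩ := hα
  obtain ⟨hy0, hy1⟩ := hy
  obtain ⟨hz0, hz1⟩ := hz
  set q : ℝ := 1 - p with hqdef
  set b : ℝ := 1 - α with hbdef
  have hq : 0 < q := by rw [hqdef]; linarith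
  have hb : 0 < b := by rw [hbdef]; linarith
  set c : ℝ := p * b * y + α * z with hcdef
  have hc0 : 0 ≤ c := by
    rw [hcdef]
    have := mul_nonneg (mul_nonneg hp0.le hb.le) hy0
    have := mul_nonneg hα0.le hz0
    linarith
  have hclt : c < 1 - q * b := by
    have h1 : p * b * y < p * b := by
      nlinarith [mul_pos hp0 hb]
    have h2 : α * z < α := by nlinarith
    have h3 : p * b + α = 1 - q * b := by rw [hqdef, hbdef]; ring
    rw [hcdef]; linarith
  set D : ℝ := 1 - 4 * q * b * (p * b * y + α * z) with hDdef
  have hDc : D = 1 - 4 * q * b * c := by rw [hDdef, hcdef]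
  have hD : 0 < D := by
    have h1 : 0 < q * b * (1 - q * b - c) := mul_pos (mul_pos hq hb) (by linarith)
    nlinarith [sq_nonneg (1 - 2 * q * b)]
  set s : ℝ := Real.sqrt D with hsdef
  have hs2 : s ^ 2 = D := Real.sq_sqrt hD.le
  have hs0 : 0 < s := Real.sqrt_pos.mpr hD
  have hs1 : s ≤ 1 := by
    nlinarith [mul_nonneg (mul_nonneg (mul_nonneg (by norm_num : (0:ℝ) ≤ 4) hq.le) hb.le) hc0]
  have hsgt : 1 - 2 * q * b < s ∧ 2 * q * b - 1 < s := by
    have key : (1 - 2 * q * b) ^ 2 < s ^ 2 := by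
      have h1 : 0 < q * b * (1 - q * b - c) := mul_pos (mul_pos hq hb) (by linarith)
      nlinarith
    constructor <;> nlinarith
  clear_value q b c D s
  intro uv
  obtain ⟨u, v⟩ := uv
  simp only [Set.mem_Icc, Prod.mk_le_mk, Prod.mk.injEq]
  constructor
  · rintro ⟨⟨⟨hu0, hv0⟩, hu1, hv1⟩, he1, he2⟩
    have hquad : q * b * v ^ 2 - v + c = 0 := by
      linear_combination b * he1 + he2 + hcdef
    have hfac : (2 * q * b * v - 1 - s) * (2 * q * b * v - 1 + s) = 0 := by
      linear_combination 4 * q * b * hquad - hs2 - hDc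
    rcases mul_eq_zero.mp hfac with h | h
    · exfalso
      nlinarith [mul_nonneg (mul_pos hq hb).le (by linarith : (0:ℝ) ≤ 1 - v), hsgt.2]
    · have hv : v = 1 / (2 * q * b) * (1 - s) := by
        field_simp [hq.ne', hb.ne']
        linarith
      have hu : u = 1 / (2 * q * b ^ 2) * (1 - s) - α * z / b := by
        have hrw : 1 / (2 * q * b ^ 2) * (1 - s) - α * z / b = (v - α * z) / b := by
          rw [hv]; field_simp [hq.ne', hb.ne']
        rw [hrw, eq_div_iff hb.ne']
        linarith
      exact ⟨hu, hv⟩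
  · rintro ⟨rfl, rfl⟩
    set vA : ℝ := 1 / (2 * q * b) * (1 - s) with hvAdef
    set uA : ℝ := 1 / (2 * q * b ^ 2) * (1 - s) - α * z / b with huAdef
    clear_value vA uA
    have hvA : 2 * q * b * vA = 1 - s := by
      rw [hvAdef]; field_simp [hq.ne', hb.ne']
    have huA : b * uA = vA - α * z := by
      rw [huAdef, hvAdef]; field_simp [hq.ne', hb.ne']
    have he2 : b * uA - vA + α * z = 0 := by linear_combination huA
    have hquad : q * b * vA ^ 2 - vA + c = 0 := by
      have h4 : (4 * q * b) * (q * b * vA ^ 2 - vA + c) = 0 := by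
        linear_combination (2 * q * b * vA + 1 - s) * hvA - 2 * hvA + hs2 + hDc
      have hne4 : (0:ℝ) < 4 * q * b := mul_pos (mul_pos (by norm_num) hq) hb
      have hne : (4 * q * b) ≠ 0 := ne_of_gt hne4
      exact (mul_eq_zero.mp h4).resolve_left hne
    have he1 : q * vA ^ 2 - uA + p * y = 0 := by
      have h' : b * (q * vA ^ 2 - uA + p * y) = 0 := by
        linear_combination hquad - huA - hcdef
      exact (mul_eq_zero.mp h').resolve_left hb.ne'
    have hvA0 : 0 ≤ vA := by
      rw [hvAdef]
      have h2qb : 0 < 2 * q * b := mul_pos (mul_pos two_pos hq) hb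
      exact mul_nonneg (le_of_lt (one_div_pos.mpr h2qb)) (by linarith)
    have hvA1 : vA ≤ 1 := by
      have h2qb : 0 < 2 * q * b := mul_pos (mul_pos two_pos hq) hb
      have hle : 2 * q * b * vA ≤ 2 * q * b * 1 := by rw [hvA, mul_one]; linarith [hsgt.1]
      exact le_of_mul_le_mul_left hle h2qb
    have huAeq : uA = q * vA ^ 2 + p * y := by linear_combination -he1
    have huA0 : 0 ≤ uA := by
      rw [huAeq]
      have h1 := mul_nonneg hp0.le hy0
      have h2 := mul_nonneg hq.le (sq_nonneg vA)
      linarith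
    have huA1 : uA ≤ 1 := by
      rw [huAeq]
      have hsq : vA ^ 2 ≤ 1 := by nlinarith [mul_le_mul hvA1 hvA1 hvA0 zero_le_one]
      have h1 : q * vA ^ 2 ≤ q * 1 := mul_le_mul_of_nonneg_left hsq hq.le
      have h2 : p * y < p * 1 := mul_lt_mul_of_pos_left hy1 hp0
      rw [hqdef] at h1 ⊢
      linarith
    exact ⟨⟨⟨huA0, hvA0⟩, huA1, hvA1⟩, he1, he2⟩
end
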